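/- Let R = ℂ[x,y,z], W = xyz, and let (P,δ) be the matrix factorization of the previous statement (the winding-m matrix factorization with T^A = 1). Then in the quotient coker(δ|odd) of the even part by the image of the odd part, after changing basis of the even part to {D₀, D₁−D₀, D_{2k} (1 ≤ k ≤ m), D_{2k+1} + x(yD_{2k} − D_{2k−1}) (1 ≤ k ≤ m−1)}, the cokernel decomposes as (R/⟨z⟩)·D₀ ⊕ ⊕_{k=1}^{m} (R/⟨xyz⟩)·D_{2k}. In particular, in the singularity category D_Sing(R/⟨xyz⟩) (where free modules R/⟨xyz⟩ are zero), the cokernel is isomorphic to R/⟨z⟩. -/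

import Mathlib

noncomputable section

open MvPolynomial Matrix

/-- `R = ℂ[x,y,z]`. -/
abbrev Rpoly : Type := MvPolynomial (Fin 3) ℂ

def xP : Rpoly := X 0
def yP : Rpoly := X 1
def zP : Rpoly := X 2

/-- `Aent i j` = coefficient of `D_j` in `δ(C_i)` for the winding-`m` matrix
factorization of `xyz` (with `T^A = 1`):
`δ(C₀) = z D₀`; `δ(C₁) = D₁ − D₀`;
`δ(C_{2k}) = zx(−y D_{2k} + D_{2k−1})` for `1 ≤ k ≤ m`;
`δ(C_{2k+1}) = D_{2k+1} + xy D_{2k} − x D_{2k−1}` for `1 ≤ k ≤ m−1`. -/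
def Aent : ℕ → ℕ → Rpoly := fun i j =>
  if i = 0 then (if j = 0 then zP else 0)
  else if i = 1 then (if j = 1 then 1 else if j = 0 then -1 else 0)
  else if i % 2 = 0 then
    (if j = i then -(xP * yP * zP) else if j + 1 = i then zP * xP else 0)
  else
    (if j = i then 1 else if j + 1 = i then xP * yP else if j + 2 = i then -xP else 0)

/-- The matrix of `δ` on the odd generators `C₀, …, C_{2m}`. -/
def Amat (m : ℕ) : Matrix (Fin (2 * m + 1)) (Fin (2 * m + 1)) Rpoly :=
  fun i j => Aent (i : ℕ) (j : ℕ)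

/-- The restriction of `δ` to the odd part, on coordinate vectors:
`δ(Σᵢ cᵢ Cᵢ)` has `D_j`-coordinate `Σᵢ cᵢ Aᵢⱼ`, i.e. the linear map `Aᵀ`. -/
def deltaOddBig (m : ℕ) : (Fin (2 * m + 1) → Rpoly) →ₗ[Rpoly] (Fin (2 * m + 1) → Rpoly) :=
  Matrix.toLin' (Amat m)ᵀ

/-!
Modulo the odd relations `D₁ ≡ D₀` and `D_{2k+1} ≡ x D_{2k-1} - xy D_{2k}` every odd generator is a
combination of even ones. Unwinding the recursion, `v` becomes
`(v₀ + S₀) D₀ + Σ_{k ≥ 1} (v_{2k} - xy S_k) D_{2k}` with `S_k = Σ_{j ≥ k} x^{j-k} v_{2j+1}`, and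
the even relations become `z D₀ = 0` and `xyz D_{2k} = 0`. So the map sending `v` to these
coefficients is onto and kills the image of `δ` (for `v = δ u` the sums `S_k` telescope). Its kernel
lies in the image: if `v₀ + S₀ = -z H₀` and `v_{2k} - xy S_k = xyz H_k`, then
`u_{2k} = x H_{k+1} - H_k`, `u_{2k+1} = S_k + zx H_{k+1}` solves `δ u = v`.
-/

open Finset Function

section Padding

variable {R : Type*} [Zero R] {n : ℕ}

lemma extend_val_of_lt (v : Fin n → R) {t : ℕ} (ht : t < n) : extend Fin.val v 0 t = v ⟨t, ht⟩ :=
  Fin.val_injective.extend_apply _ _ ⟨t, ht⟩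

lemma extend_val_of_le (v : Fin n → R) {t : ℕ} (ht : n ≤ t) : extend Fin.val v 0 t = 0 :=
  extend_apply' _ _ _ fun ⟨i, hi⟩ => by omega

lemma extend_val_restrict {U : ℕ → R} (hU : ∀ t, n ≤ t → U t = 0) :
    extend Fin.val (fun i : Fin n => U i) 0 = U := by
  funext t
  by_cases ht : t < n
  · exact extend_val_of_lt _ ht
  · rw [extend_val_of_le _ (not_lt.1 ht), hU t (not_lt.1 ht)]

lemma extend_val_cons_zero (a : R) (v : Fin n → R) :
    extend Fin.val (Fin.cons a v : Fin (n + 1) → R) 0 0 = a :=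
  extend_val_of_lt _ n.succ_pos

lemma extend_val_cons_succ (a : R) (v : Fin n → R) (k : ℕ) :
    extend Fin.val (Fin.cons a v : Fin (n + 1) → R) 0 (k + 1) = extend Fin.val v 0 k := by
  by_cases hk : k < n
  · rw [extend_val_of_lt _ hk, extend_val_of_lt _ (by omega)]
    exact Fin.cons_succ (α := fun _ => R) a v ⟨k, hk⟩
  · rw [extend_val_of_le _ (by omega), extend_val_of_le _ (by omega)]

end Padding

lemma sum_range_eq_of_eq_zero_off_Icc {M : Type*} [AddCommMonoid M] {n t : ℕ} {g : ℕ → M}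
    (hn : ∀ i, n ≤ i → g i = 0) (ht : ∀ i, i < t ∨ t + 2 < i → g i = 0) :
    ∑ i ∈ range n, g i = g t + g (t + 1) + g (t + 2) := by
  have h₁ : ∑ i ∈ range n, g i = ∑ i ∈ range (n + (t + 3)), g i :=
    sum_subset (range_subset_range.2 (Nat.le_add_right _ _)) fun i hi hin => by
      simp only [mem_range] at hi hin
      exact hn i (by omega)
  have h₂ : ∑ i ∈ Ico t (t + 3), g i = ∑ i ∈ range (n + (t + 3)), g i :=
    sum_subset (fun i hi => by simp only [mem_Ico, mem_range] at hi ⊢; omega) fun i _ hi => by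
      simp only [mem_Ico] at hi
      exact ht i (by omega)
  rw [h₁, ← h₂, sum_Ico_eq_sum_range]
  simp [sum_range_succ, add_assoc]

section TailSum

variable {R : Type*} [CommSemiring R]

def tailSum (a : R) (n : ℕ) : (ℕ → R) →ₗ[R] ℕ → R :=
  LinearMap.pi fun k => ∑ j ∈ range n, a ^ j • LinearMap.proj (k + j)

@[simp]
lemma tailSum_apply (a : R) (n : ℕ) (f : ℕ → R) (k : ℕ) :
    tailSum a n f k = ∑ j ∈ range n, a ^ j * f (k + j) := by
  simp [tailSum]

lemma tailSum_shift (a : R) (n : ℕ) (f : ℕ → R) (k : ℕ) :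
    tailSum a n (fun j => f (j + 1)) k = tailSum a n f (k + 1) := by
  simp only [tailSum_apply, add_right_comm k _ 1]

lemma tailSum_eq_add_mul {a : R} {n : ℕ} {f : ℕ → R} {k : ℕ} (h : f (k + n) = 0) :
    tailSum a n f k = f k + a * tailSum a n f (k + 1) := by
  have h₁ := sum_range_succ' (fun j => a ^ j * f (k + j)) n
  rw [sum_range_succ, h, mul_zero, add_zero] at h₁
  simp only [tailSum_apply, h₁, mul_sum, pow_succ', mul_assoc, add_assoc]
  simp [add_comm]

lemma tailSum_eq_zero {a : R} {n : ℕ} {f : ℕ → R} {k : ℕ} (h : ∀ j, k ≤ j → f j = 0) :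
    tailSum a n f k = 0 := by
  simp [h _ (Nat.le_add_right k _)]

end TailSum

section Interleave

variable {R : Type*}

def interleave (e o : ℕ → R) (t : ℕ) : R :=
  if Even t then e (t / 2) else o (t / 2)

@[simp]
lemma interleave_two_mul (e o : ℕ → R) (k : ℕ) : interleave e o (2 * k) = e k := by
  simp [interleave]

@[simp]
lemma interleave_two_mul_add_one (e o : ℕ → R) (k : ℕ) : interleave e o (2 * k + 1) = o k := by
  have : (2 * k + 1) / 2 = k := by omega
  simp [interleave, this]

end Interleave

section Coker

variable {m : ℕ}

lemma Aent_eq_zero_of_lt_or_lt {i t : ℕ} (h : i < t ∨ t + 2 < i) : Aent i t = 0 := by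
  unfold Aent
  split_ifs <;> first | rfl | omega

lemma extend_deltaOddBig (u : Fin (2 * m + 1) → Rpoly) (t : ℕ) :
    extend Fin.val (deltaOddBig m u) 0 t =
      Aent t t * extend Fin.val u 0 t + Aent (t + 1) t * extend Fin.val u 0 (t + 1) +
        Aent (t + 2) t * extend Fin.val u 0 (t + 2) := by
  by_cases ht : t < 2 * m + 1
  · rw [extend_val_of_lt _ ht]
    simp only [deltaOddBig, Matrix.toLin'_apply, mulVec, dotProduct, transpose_apply, Amat]
    rw [← sum_range_eq_of_eq_zero_off_Icc (n := 2 * m + 1)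
      (g := fun i => Aent i t * extend Fin.val u 0 i), ← Fin.sum_univ_eq_sum_range]
    · simp [Fin.val_injective.extend_apply]
    · intro i hi
      rw [extend_val_of_le u hi, mul_zero]
    · intro i hi
      rw [Aent_eq_zero_of_lt_or_lt hi, zero_mul]
  · simp only [extend_val_of_le _ (not_lt.1 ht), extend_val_of_le u (by omega : 2 * m + 1 ≤ t + 1),
      extend_val_of_le u (by omega : 2 * m + 1 ≤ t + 2), mul_zero, add_zero]

lemma extend_deltaOddBig_zero (u : Fin (2 * m + 1) → Rpoly) :
    extend Fin.val (deltaOddBig m u) 0 0 =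
      zP * extend Fin.val u 0 0 - extend Fin.val u 0 1 := by
  have h₀ : Aent 0 0 = zP := rfl
  have h₁ : Aent 1 0 = -1 := rfl
  have h₂ : Aent 2 0 = 0 := rfl
  rw [extend_deltaOddBig, h₀, h₁, h₂]
  ring

lemma extend_deltaOddBig_two_mul_add_one (u : Fin (2 * m + 1) → Rpoly) (k : ℕ) :
    extend Fin.val (deltaOddBig m u) 0 (2 * k + 1) =
      extend Fin.val u 0 (2 * k + 1) + zP * xP * extend Fin.val u 0 (2 * (k + 1)) -
        xP * extend Fin.val u 0 (2 * (k + 1) + 1) := by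
  obtain ⟨h₀, h₁, h₂⟩ : Aent (2 * k + 1) (2 * k + 1) = 1 ∧
      Aent (2 * (k + 1)) (2 * k + 1) = zP * xP ∧ Aent (2 * (k + 1) + 1) (2 * k + 1) = -xP := by
    refine ⟨?_, ?_, ?_⟩ <;> unfold Aent <;> split_ifs <;> first | rfl | omega | contradiction
  rw [extend_deltaOddBig, show 2 * k + 1 + 1 = 2 * (k + 1) by ring,
    show 2 * k + 1 + 2 = 2 * (k + 1) + 1 by ring, h₀, h₁, h₂]
  ring

lemma extend_deltaOddBig_two_mul_succ (u : Fin (2 * m + 1) → Rpoly) (k : ℕ) :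
    extend Fin.val (deltaOddBig m u) 0 (2 * (k + 1)) =
      -(xP * yP * zP) * extend Fin.val u 0 (2 * (k + 1)) +
        xP * yP * extend Fin.val u 0 (2 * (k + 1) + 1) := by
  obtain ⟨h₀, h₁, h₂⟩ : Aent (2 * (k + 1)) (2 * (k + 1)) = -(xP * yP * zP) ∧
      Aent (2 * (k + 1) + 1) (2 * (k + 1)) = xP * yP ∧
      Aent (2 * (k + 1) + 2) (2 * (k + 1)) = 0 := by
    refine ⟨?_, ?_, ?_⟩ <;> unfold Aent <;> split_ifs <;> first | rfl | omega | contradiction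
  rw [extend_deltaOddBig, h₀, h₁, h₂]
  ring

def oddTail (m : ℕ) : (Fin (2 * m + 1) → Rpoly) →ₗ[Rpoly] ℕ → Rpoly :=
  tailSum xP m ∘ₗ LinearMap.funLeft Rpoly Rpoly (fun j => 2 * j + 1) ∘ₗ
    ExtendByZero.linearMap Rpoly Fin.val

lemma oddTail_apply (v : Fin (2 * m + 1) → Rpoly) (k : ℕ) :
    oddTail m v k = tailSum xP m (fun j => extend Fin.val v 0 (2 * j + 1)) k :=
  rfl

lemma oddTail_eq_add_mul (v : Fin (2 * m + 1) → Rpoly) (k : ℕ) :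
    oddTail m v k = extend Fin.val v 0 (2 * k + 1) + xP * oddTail m v (k + 1) :=
  tailSum_eq_add_mul (extend_val_of_le v (by dsimp only; omega))

lemma oddTail_eq_zero (v : Fin (2 * m + 1) → Rpoly) {k : ℕ} (hk : m ≤ k) : oddTail m v k = 0 :=
  tailSum_eq_zero fun j hj => extend_val_of_le v (by dsimp only; omega)

lemma oddTail_deltaOddBig (u : Fin (2 * m + 1) → Rpoly) (k : ℕ) :
    oddTail m (deltaOddBig m u) k = extend Fin.val u 0 (2 * k + 1) +
      zP * xP * tailSum xP m (fun j => extend Fin.val u 0 (2 * (j + 1))) k := by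
  set U := extend Fin.val u 0
  have hcol : (fun j => extend Fin.val (deltaOddBig m u) 0 (2 * j + 1)) =
      (fun j => U (2 * j + 1)) + (zP * xP) • (fun j => U (2 * (j + 1))) -
        xP • fun j => U (2 * (j + 1) + 1) := by
    funext j
    simp [U, extend_deltaOddBig_two_mul_add_one]
  rw [oddTail_apply, hcol, map_sub, map_add, map_smul, map_smul]
  simp only [Pi.add_apply, Pi.sub_apply, Pi.smul_apply, smul_eq_mul]
  rw [tailSum_shift (f := fun j => U (2 * j + 1)),
    tailSum_eq_add_mul (f := fun j => U (2 * j + 1)) (extend_val_of_le u (by omega))]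
  ring

def cokerMap (m : ℕ) : (Fin (2 * m + 1) → Rpoly) →ₗ[Rpoly]
    (Rpoly ⧸ (Ideal.span {zP} : Ideal Rpoly)) ×
      (Fin m → Rpoly ⧸ (Ideal.span {xP * yP * zP} : Ideal Rpoly)) :=
  ((Ideal.span {zP}).mkQ ∘ₗ
      (LinearMap.proj 0 ∘ₗ (ExtendByZero.linearMap Rpoly Fin.val + oddTail m))).prod
    (LinearMap.pi fun k : Fin m => (Ideal.span {xP * yP * zP}).mkQ ∘ₗ
      (LinearMap.proj (2 * ((k : ℕ) + 1)) ∘ₗ ExtendByZero.linearMap Rpoly Fin.val -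
        (xP * yP) • LinearMap.proj ((k : ℕ) + 1) ∘ₗ oddTail m))

lemma cokerMap_apply (v : Fin (2 * m + 1) → Rpoly) :
    cokerMap m v = (Submodule.Quotient.mk (extend Fin.val v 0 0 + oddTail m v 0),
      fun k : Fin m => Submodule.Quotient.mk
        (extend Fin.val v 0 (2 * ((k : ℕ) + 1)) - xP * yP * oddTail m v ((k : ℕ) + 1))) :=
  rfl

lemma range_deltaOddBig_le_ker_cokerMap :
    LinearMap.range (deltaOddBig m) ≤ LinearMap.ker (cokerMap m) := by
  rintro _ ⟨u, rfl⟩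
  rw [LinearMap.mem_ker, cokerMap_apply, Prod.mk_eq_zero]
  refine ⟨(Submodule.Quotient.mk_eq_zero _).2 ?_,
    funext fun k => (Submodule.Quotient.mk_eq_zero _).2 ?_⟩
  · rw [extend_deltaOddBig_zero, oddTail_deltaOddBig]
    set U := extend Fin.val u 0
    set T := tailSum xP m fun j => U (2 * (j + 1))
    exact Ideal.mem_span_singleton'.2 ⟨U 0 + xP * T 0, by ring⟩
  · rw [extend_deltaOddBig_two_mul_succ, oddTail_deltaOddBig]
    set U := extend Fin.val u 0
    set T := tailSum xP m fun j => U (2 * (j + 1))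
    exact Ideal.mem_span_singleton'.2 ⟨-(U (2 * (k + 1)) + xP * T (k + 1)), by ring⟩

lemma cokerMap_surjective : Surjective (cokerMap m) := by
  rintro ⟨p, q⟩
  obtain ⟨r, rfl⟩ := Submodule.Quotient.mk_surjective _ p
  choose w hw using fun k => Submodule.Quotient.mk_surjective _ (q k)
  set U := interleave (extend Fin.val (Fin.cons r w : Fin (m + 1) → Rpoly) 0) 0
  have hU : ∀ t, 2 * m + 1 ≤ t → U t = 0 := by
    intro t ht
    obtain ⟨k, rfl | rfl⟩ := Nat.even_or_odd' t
    · simp only [U, interleave_two_mul]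
      exact extend_val_of_le _ (by omega)
    · simp [U]
  have hS (k : ℕ) : oddTail m (fun i => U i) k = 0 := by
    simp [oddTail_apply, extend_val_restrict hU, U]
  refine ⟨fun i => U i, ?_⟩
  rw [cokerMap_apply, extend_val_restrict hU]
  simp only [hS, add_zero, mul_zero, sub_zero]
  refine Prod.ext ?_ (funext fun k => ?_)
  · simp [U, interleave, extend_val_cons_zero]
  · simp only [U, interleave_two_mul, extend_val_cons_succ, extend_val_of_lt _ k.isLt, Fin.eta,
      ← hw k]

lemma mem_range_deltaOddBig {v : Fin (2 * m + 1) → Rpoly} (H : ℕ → Rpoly)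
    (hH : ∀ k, m < k → H k = 0)
    (h₀ : extend Fin.val v 0 0 + oddTail m v 0 = -(zP * H 0))
    (hsucc : ∀ k < m, extend Fin.val v 0 (2 * (k + 1)) - xP * yP * oddTail m v (k + 1) =
      xP * yP * zP * H (k + 1)) :
    v ∈ LinearMap.range (deltaOddBig m) := by
  set S := oddTail m v
  set U := interleave (fun k => xP * H (k + 1) - H k) (fun k => S k + zP * xP * H (k + 1))
  have hU : ∀ t, 2 * m + 1 ≤ t → U t = 0 := by
    intro t ht
    obtain ⟨k, rfl | rfl⟩ := Nat.even_or_odd' t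
    · simp [U, hH k (by omega), hH (k + 1) (by omega)]
    · simp [U, S, oddTail_eq_zero v (by omega : m ≤ k), hH (k + 1) (by omega)]
  refine ⟨fun i => U i, extend_injective Fin.val_injective 0 (funext fun t => ?_)⟩
  dsimp only
  by_cases ht : 2 * m + 1 ≤ t
  · rw [extend_val_of_le _ ht, extend_val_of_le _ ht]
  obtain ⟨k, rfl | rfl⟩ := Nat.even_or_odd' t
  · rcases k with _ | k
    · rw [Nat.mul_zero, extend_deltaOddBig_zero, extend_val_restrict hU]
      have hU₀ : U 0 = xP * H 1 - H 0 := interleave_two_mul _ _ 0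
      have hU₁ : U 1 = S 0 + zP * xP * H 1 := interleave_two_mul_add_one _ _ 0
      rw [hU₀, hU₁]
      linear_combination -h₀
    · rw [extend_deltaOddBig_two_mul_succ, extend_val_restrict hU]
      simp only [U, interleave_two_mul, interleave_two_mul_add_one]
      linear_combination -hsucc k (by omega)
  · rw [extend_deltaOddBig_two_mul_add_one, extend_val_restrict hU]
    simp only [U, interleave_two_mul, interleave_two_mul_add_one]
    linear_combination oddTail_eq_add_mul v k

lemma ker_cokerMap_le_range_deltaOddBig :
    LinearMap.ker (cokerMap m) ≤ LinearMap.range (deltaOddBig m) := by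
  intro v hv
  rw [LinearMap.mem_ker, cokerMap_apply, Prod.mk_eq_zero] at hv
  obtain ⟨g, hg⟩ := Ideal.mem_span_singleton'.1 ((Submodule.Quotient.mk_eq_zero _).1 hv.1)
  choose c hc using fun k => Ideal.mem_span_singleton'.1
    ((Submodule.Quotient.mk_eq_zero _).1 (congrFun hv.2 k))
  refine mem_range_deltaOddBig (extend Fin.val (Fin.cons (-g) c : Fin (m + 1) → Rpoly) 0)
    (fun k hk => extend_val_of_le _ hk) ?_ fun k hk => ?_
  · rw [extend_val_cons_zero, ← hg]
    ring
  · rw [extend_val_cons_succ, extend_val_of_lt c hk, ← hc ⟨k, hk⟩]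
    ring

end Coker

/-- in the quotient `coker(δ|odd)` of the even part by the image of
the odd part (after the basis change `{D₀, D₁−D₀, D_{2k}, D_{2k+1}+x(yD_{2k}−D_{2k−1})}`)
the cokernel decomposes as `(R/⟨z⟩)·D₀ ⊕ ⊕_{k=1}^m (R/⟨xyz⟩)·D_{2k}`;
in particular (since `R/⟨xyz⟩` is free over `R/⟨W⟩`, hence zero in the
singularity category `D_Sing(R/⟨xyz⟩)`), the cokernel is isomorphic to `R/⟨z⟩`
in the singularity category. -/
theorem stmt14 (m : ℕ) :
    Nonempty (((Fin (2 * m + 1) → Rpoly) ⧸ LinearMap.range (deltaOddBig m)) ≃ₗ[Rpoly]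
      ((Rpoly ⧸ (Ideal.span {zP} : Ideal Rpoly)) ×
        (Fin m → Rpoly ⧸ (Ideal.span {xP * yP * zP} : Ideal Rpoly)))) := by
  have hker : LinearMap.ker (cokerMap m) = LinearMap.range (deltaOddBig m) :=
    le_antisymm ker_cokerMap_le_range_deltaOddBig range_deltaOddBig_le_ker_cokerMap
  exact ⟨(Submodule.quotEquivOfEq _ _ hker.symm).trans
    ((cokerMap m).quotKerEquivOfSurjective cokerMap_surjective)⟩

end
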